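/- arXiv:2104.12216 — 2 statements merged into one kernel-verified Lean document; each statement's English description precedes it below -/
import Mathlib

section
/- For all positive reals λ, λ', μ, μ', ν, ν', ℬ(λ,λ',μ,μ',ν,ν') = (1/B(λ,λ')) · Σ_{k=0}^∞ [(1−λ')_k/(k!(λ+k))] · (λ+k) ∫₀¹ t^(λ+k−1) I(μ,μ';t) I(ν,ν';t) dt; that is, ℬ(λ,λ',μ,μ',ν,ν') is the stated series combination of the values ℬ(λ+k,1,μ,μ',ν,ν'). -/
/-!
For `0 < t < 1` the binomial series gives `(1 - t)^(λ'-1) = ∑ₖ cₖ tᵏ` with `cₖ = (1-λ')ₖ / k!`;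
substituting it into the integral defining `ℬ` and integrating termwise gives the series.
Since `0 ≤ I ≤ 1`, the `k`-th term has absolute integral at most `|cₖ| / (λ+k)`, and these are
summable: for `k ≥ λ'` one has `(k+1)|cₖ₊₁| = (k+1-λ')|cₖ|`, so `λ'|cₖ|/(k+1) = |cₖ| - |cₖ₊₁|`
telescopes.
-/

open MeasureTheory

/-- The beta function `B(a,b) = ∫₀¹ s^(a-1) (1-s)^(b-1) ds`. -/
noncomputable def betaFn (a b : ℝ) : ℝ := ∫ s in (0:ℝ)..1, s ^ (a - 1) * (1 - s) ^ (b - 1)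

/-- The regularized incomplete beta function `I(a,b;t)`. -/
noncomputable def regIncBeta (a b t : ℝ) : ℝ :=
  (betaFn a b)⁻¹ * ∫ s in (0:ℝ)..t, s ^ (a - 1) * (1 - s) ^ (b - 1)

/-- `ℬ(λ,λ',μ,μ',ν,ν') = (1/B(λ,λ')) ∫₀¹ t^(λ-1)(1-t)^(λ'-1) I(μ,μ';t) I(ν,ν';t) dt`. -/
noncomputable def calB (l l' m m' n n' : ℝ) : ℝ :=
  (betaFn l l')⁻¹ * ∫ t in (0:ℝ)..1,
    t ^ (l - 1) * (1 - t) ^ (l' - 1) * regIncBeta m m' t * regIncBeta n n' t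

/-- The Pochhammer symbol (rising factorial) `(a)_k = a(a+1)⋯(a+k-1)`. -/
noncomputable def poch (a : ℝ) (k : ℕ) : ℝ := ∏ i ∈ Finset.range k, (a + i)

/-- The hypergeometric value `₃F₂(a₁,a₂,a₃; b₁,b₂; 1)`. -/
noncomputable def F32 (a1 a2 a3 b1 b2 : ℝ) : ℝ :=
  ∑' k : ℕ, poch a1 k * poch a2 k * poch a3 k / (poch b1 k * poch b2 k * (Nat.factorial k))

open Set
open scoped Nat

lemma poch_succ (a : ℝ) (k : ℕ) : poch a (k + 1) = poch a k * (a + k) :=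
  Finset.prod_range_succ _ _

lemma poch_eq_factorial_mul_multichoose (a : ℝ) (k : ℕ) :
    poch a k = k ! * Ring.multichoose a k := by
  rw [← nsmul_eq_mul, Ring.factorial_nsmul_multichoose_eq_ascPochhammer,
    Polynomial.ascPochhammer_smeval_eq_eval]
  induction k with
  | zero => simp [poch]
  | succ k ih => rw [poch_succ, ih, ascPochhammer_succ_eval]

theorem hasSum_poch_div_factorial_mul_pow (b : ℝ) {t : ℝ} (ht : |t| < 1) :
    HasSum (fun k : ℕ => poch b k / k ! * t ^ k) ((1 - t) ^ (-b)) := by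
  have h := (Real.one_div_one_sub_rpow_hasFPowerSeriesOnBall_zero b).hasSum (y := t)
    (by simpa [edist_dist, Real.dist_eq] using ht)
  rw [zero_add, one_div, ← Real.rpow_neg (by linarith [le_abs_self t])] at h
  simp only [FormalMultilinearSeries.ofScalars_apply_eq] at h
  refine h.congr_fun fun k => ?_
  rw [poch_eq_factorial_mul_multichoose, Ring.multichoose_eq, smul_eq_mul]
  field_simp

lemma summable_div_succ_of_succ_mul_le {u : ℕ → ℝ} {δ : ℝ} {K : ℕ} (hδ : 0 < δ)
    (hu : ∀ k, 0 ≤ u k) (h : ∀ k ≥ K, (k + 1) * u (k + 1) ≤ (k + 1 - δ) * u k) :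
    Summable fun k : ℕ => u k / (k + 1) := by
  rw [← summable_nat_add_iff K]
  have hstep : ∀ k, u (k + K) / ((k + K : ℕ) + 1) ≤ (u (k + K) - u (k + 1 + K)) / δ := by
    intro k
    have := h (k + K) (by omega)
    rw [div_le_div_iff₀ (by positivity) hδ, show k + 1 + K = k + K + 1 by omega]
    linarith
  refine summable_of_sum_range_le (c := u K / δ) (fun k => div_nonneg (hu _) (by positivity))
    fun n => ?_
  calc ∑ i ∈ Finset.range n, u (i + K) / ((i + K : ℕ) + 1)
      ≤ ∑ i ∈ Finset.range n, (u (i + K) - u (i + 1 + K)) / δ :=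
        Finset.sum_le_sum fun i _ => hstep i
    _ = (u K - u (n + K)) / δ := by
        rw [← Finset.sum_div, Finset.sum_range_sub' (fun i => u (i + K)), zero_add]
    _ ≤ u K / δ := by gcongr; linarith [hu (n + K)]

lemma succ_mul_poch_div_factorial_succ (b : ℝ) (k : ℕ) :
    (k + 1) * (poch b (k + 1) / (k + 1)!) = (b + k) * (poch b k / k !) := by
  rw [poch_succ, Nat.factorial_succ]
  push_cast
  field_simp

lemma summable_abs_poch_one_sub_div_factorial_div {a l : ℝ} (ha : 0 < a) (hl : 0 < l) :
    Summable fun k : ℕ => |poch (1 - a) k / k !| / (l + k) := by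
  have hsucc : Summable fun k : ℕ => |poch (1 - a) k / k !| / (k + 1) := by
    refine summable_div_succ_of_succ_mul_le ha (K := ⌈a⌉₊) (fun k => abs_nonneg _)
      fun k hk => le_of_eq ?_
    have hak : a ≤ k := (Nat.le_ceil a).trans (Nat.cast_le.2 hk)
    have h := congrArg abs (succ_mul_poch_div_factorial_succ (1 - a) k)
    rw [abs_mul, abs_mul, abs_of_pos (by positivity),
      abs_of_nonneg (show (0:ℝ) ≤ 1 - a + k by linarith)] at h
    rw [h]
    ring
  refine (hsucc.mul_left (min l 1)⁻¹).of_nonneg_of_le (fun k => by positivity) fun k => ?_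
  have hmin : 0 < min l 1 := lt_min hl one_pos
  rw [← div_eq_inv_mul, div_div]
  gcongr
  nlinarith [min_le_left l 1, min_le_right l 1, (Nat.cast_nonneg k : (0:ℝ) ≤ k)]

lemma intervalIntegrable_betaIntegrand_zero_half {a : ℝ} (ha : 0 < a) (b : ℝ) :
    IntervalIntegrable (fun s : ℝ => s ^ (a - 1) * (1 - s) ^ (b - 1)) volume 0 (1 / 2) := by
  refine (intervalIntegral.intervalIntegrable_rpow' (by linarith)).mul_continuousOn ?_
  refine (continuousOn_const.sub continuousOn_id).rpow_const fun s hs => Or.inl ?_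
  rw [Set.uIcc_of_le (by norm_num)] at hs
  exact (sub_pos.2 (hs.2.trans_lt (by norm_num))).ne'

lemma intervalIntegrable_betaIntegrand {a b : ℝ} (ha : 0 < a) (hb : 0 < b) :
    IntervalIntegrable (fun s : ℝ => s ^ (a - 1) * (1 - s) ^ (b - 1)) volume 0 1 := by
  have hright := ((intervalIntegrable_betaIntegrand_zero_half hb a).comp_sub_left 1).symm
  refine (intervalIntegrable_betaIntegrand_zero_half ha b).trans ?_
  norm_num [mul_comm] at hright ⊢
  exact hright

lemma regIncBeta_mem_Icc {a b t : ℝ} (ha : 0 < a) (hb : 0 < b) (ht : t ∈ Icc (0:ℝ) 1) :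
    regIncBeta a b t ∈ Icc 0 1 := by
  have hpos : ∀ s ∈ Icc (0:ℝ) 1, 0 ≤ s ^ (a - 1) * (1 - s) ^ (b - 1) := fun s hs =>
    mul_nonneg (Real.rpow_nonneg hs.1 _) (Real.rpow_nonneg (sub_nonneg.2 hs.2) _)
  have h0 : 0 ≤ ∫ s in (0:ℝ)..t, s ^ (a - 1) * (1 - s) ^ (b - 1) :=
    intervalIntegral.integral_nonneg ht.1 fun s hs => hpos s ⟨hs.1, hs.2.trans ht.2⟩
  have hle : ∫ s in (0:ℝ)..t, s ^ (a - 1) * (1 - s) ^ (b - 1) ≤ betaFn a b :=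
    intervalIntegral.integral_mono_interval le_rfl ht.1 ht.2
      ((ae_restrict_iff' measurableSet_Ioc).2 <| .of_forall fun s hs => hpos s ⟨hs.1.le, hs.2⟩)
      (intervalIntegrable_betaIntegrand ha hb)
  exact ⟨mul_nonneg (inv_nonneg.2 (h0.trans hle)) h0, inv_mul_le_one_of_le₀ hle (h0.trans hle)⟩

lemma continuousOn_regIncBeta {a b : ℝ} (ha : 0 < a) (hb : 0 < b) :
    ContinuousOn (regIncBeta a b) (Icc 0 1) := by
  have h := intervalIntegral.continuousOn_primitive_interval'
    (intervalIntegrable_betaIntegrand ha hb) (left_mem_uIcc (a := (0:ℝ)) (b := 1))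
  rw [Set.uIcc_of_le zero_le_one] at h
  exact continuousOn_const.mul h

section RpowMulBounded

variable {g : ℝ → ℝ} {C : ℝ}

lemma integrableOn_rpow_mul_of_abs_le {p : ℝ} (hp : -1 < p)
    (hg : AEStronglyMeasurable g (volume.restrict (Ioo 0 1)))
    (hgC : ∀ t ∈ Ioo (0:ℝ) 1, |g t| ≤ C) :
    IntegrableOn (fun t => t ^ p * g t) (Ioo 0 1) :=
  ((intervalIntegral.integrableOn_Ioo_rpow_iff zero_lt_one).2 hp).mul_bdd hg
    ((ae_restrict_iff' measurableSet_Ioo).2 (.of_forall hgC))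

lemma integral_abs_rpow_mul_le {p : ℝ} (hp : -1 < p)
    (hg : AEStronglyMeasurable g (volume.restrict (Ioo 0 1)))
    (hgC : ∀ t ∈ Ioo (0:ℝ) 1, |g t| ≤ C) :
    ∫ t in Ioo (0:ℝ) 1, |t ^ p * g t| ≤ C / (p + 1) := by
  calc ∫ t in Ioo (0:ℝ) 1, |t ^ p * g t| ≤ ∫ t in Ioo (0:ℝ) 1, C * t ^ p := by
        refine setIntegral_mono_on (integrableOn_rpow_mul_of_abs_le hp hg hgC).abs
          (((intervalIntegral.integrableOn_Ioo_rpow_iff zero_lt_one).2 hp).const_mul C)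
          measurableSet_Ioo fun t ht => ?_
        rw [abs_mul, abs_of_pos (Real.rpow_pos_of_pos ht.1 p), mul_comm]
        exact mul_le_mul_of_nonneg_right (hgC t ht) (Real.rpow_nonneg ht.1.le p)
    _ = C / (p + 1) := by
        rw [integral_const_mul, ← integral_Ioc_eq_integral_Ioo,
          ← intervalIntegral.integral_of_le zero_le_one, integral_rpow (Or.inl hp),
          Real.one_rpow, Real.zero_rpow (by linarith)]
        ring

theorem hasSum_integral_rpow_mul_of_hasSum {c : ℕ → ℝ} {h : ℝ → ℝ} {l : ℝ} (hl : 0 < l)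
    (hc : Summable fun k : ℕ => |c k| / (l + k))
    (hh : ∀ t ∈ Ioo (0:ℝ) 1, HasSum (fun k => c k * t ^ k) (h t))
    (hg : AEStronglyMeasurable g (volume.restrict (Ioo 0 1)))
    (hgC : ∀ t ∈ Ioo (0:ℝ) 1, |g t| ≤ C) :
    HasSum (fun k : ℕ => c k * ∫ t in (0:ℝ)..1, t ^ (l + k - 1) * g t)
      (∫ t in (0:ℝ)..1, t ^ (l - 1) * h t * g t) := by
  simp only [intervalIntegral.integral_of_le zero_le_one, integral_Ioc_eq_integral_Ioo]
  have hp : ∀ k : ℕ, -1 < l + k - 1 := fun k => by linarith [(Nat.cast_nonneg k : (0:ℝ) ≤ k)]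
  have hsum := hasSum_integral_of_summable_integral_norm
    (F := fun k t => c k * (t ^ (l + k - 1) * g t))
    (fun k => (integrableOn_rpow_mul_of_abs_le (hp k) hg hgC).const_mul (c k))
    ((hc.mul_right C).of_nonneg_of_le
      (fun k => integral_nonneg fun t => norm_nonneg (c k * (t ^ (l + k - 1) * g t))) fun k => ?_)
  · simp only [integral_const_mul] at hsum
    have hlim : ∫ t in Ioo (0:ℝ) 1, t ^ (l - 1) * h t * g t =
        ∫ t in Ioo (0:ℝ) 1, ∑' k : ℕ, c k * (t ^ (l + k - 1) * g t) := by
      refine setIntegral_congr_fun measurableSet_Ioo fun t ht => ?_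
      rw [mul_right_comm, ← ((hh t ht).mul_left (t ^ (l - 1) * g t)).tsum_eq]
      refine tsum_congr fun k => ?_
      rw [show l + k - 1 = (l - 1) + k by ring, Real.rpow_add ht.1, Real.rpow_natCast]
      ring
    rwa [hlim]
  · simp only [Real.norm_eq_abs, abs_mul, integral_const_mul]
    have := integral_abs_rpow_mul_le (hp k) hg hgC
    rw [show l + k - 1 + 1 = l + k by ring] at this
    simp only [abs_mul] at this
    rw [div_mul_eq_mul_div, mul_div_assoc]
    exact mul_le_mul_of_nonneg_left this (abs_nonneg _)

end RpowMulBounded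

/-- `ℬ(λ,λ',μ,μ',ν,ν')` as a convergent series combination of the
values `(λ+k) ∫₀¹ t^(λ+k−1) I I dt = ℬ(λ+k,1,μ,μ',ν,ν')`. -/
theorem stmt6 (l l' m m' n n' : ℝ) (hl : 0 < l) (hl' : 0 < l') (hm : 0 < m)
    (hm' : 0 < m') (hn : 0 < n) (hn' : 0 < n') :
    Summable
      (fun k : ℕ => poch (1 - l') k / ((Nat.factorial k) * (l + k)) *
        ((l + k) * ∫ t in (0:ℝ)..1,
          t ^ (l + k - 1) * regIncBeta m m' t * regIncBeta n n' t)) ∧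
    calB l l' m m' n n' =
      (betaFn l l')⁻¹ *
        ∑' k : ℕ, poch (1 - l') k / ((Nat.factorial k) * (l + k)) *
          ((l + k) * ∫ t in (0:ℝ)..1,
            t ^ (l + k - 1) * regIncBeta m m' t * regIncBeta n n' t) := by
  set g : ℝ → ℝ := fun t => regIncBeta m m' t * regIncBeta n n' t
  have hg_le : ∀ t ∈ Ioo (0:ℝ) 1, |g t| ≤ 1 := fun t ht => by
    obtain ⟨hm0, hm1⟩ := regIncBeta_mem_Icc hm hm' (Ioo_subset_Icc_self ht)
    obtain ⟨hn0, hn1⟩ := regIncBeta_mem_Icc hn hn' (Ioo_subset_Icc_self ht)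
    rw [abs_of_nonneg (mul_nonneg hm0 hn0)]
    exact mul_le_one₀ hm1 hn0 hn1
  have hg_meas : AEStronglyMeasurable g (volume.restrict (Ioo 0 1)) :=
    (((continuousOn_regIncBeta hm hm').mul (continuousOn_regIncBeta hn hn')).mono
      Ioo_subset_Icc_self).aestronglyMeasurable measurableSet_Ioo
  have hbinom : ∀ t ∈ Ioo (0:ℝ) 1,
      HasSum (fun k => poch (1 - l') k / k ! * t ^ k) ((1 - t) ^ (l' - 1)) := fun t ht => by
    simpa only [neg_sub] using
      hasSum_poch_div_factorial_mul_pow (1 - l') (abs_lt.2 ⟨by linarith [ht.1], ht.2⟩)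
  have hsum := hasSum_integral_rpow_mul_of_hasSum hl
    (summable_abs_poch_one_sub_div_factorial_div hl' hl) hbinom hg_meas hg_le
  have hterm : ∀ k : ℕ, poch (1 - l') k / (k ! * (l + k)) *
      ((l + k) * ∫ t in (0:ℝ)..1, t ^ (l + k - 1) * regIncBeta m m' t * regIncBeta n n' t) =
      poch (1 - l') k / k ! * ∫ t in (0:ℝ)..1, t ^ (l + k - 1) * g t := fun k => by
    have : l + (k : ℝ) ≠ 0 := by positivity
    simp only [g, mul_assoc]
    field_simp
  simp only [← hterm] at hsum
  refine ⟨hsum.summable, ?_⟩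
  rw [calB, hsum.tsum_eq]
  simp only [g, mul_assoc]
end

section
/- For all positive reals μ and ν, ∫₀¹ I(μ,μ+1;t) I(ν,ν+1;t) dt = (4μν + 3(μ+ν) + 2)/(2(2μ+1)(2ν+1)) − (μ+ν) B(μ+ν+1, μ+ν+2) / (μν B(μ,μ+1) B(ν,ν+1)). -/
/-
Write `P_a(t) = ∫₀ᵗ s^(a-1) (1-s)^a ds`, so that `I(a,a+1;t) = P_a(t) / B(a,a+1)`. Integrating
`∫₀¹ P_μ P_ν` by parts against `dt` leaves integrals of `t^μ (1-t)^μ P_ν(t)`, and a second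
integration by parts turns these into integrals of `Q(t) t^(ν-1) (1-t)^ν`, where `Q` is the
primitive of the symmetric weight `t^μ (1-t)^μ`. Split `t^(ν-1) (1-t)^ν` into half of the
symmetric weight `t^(ν-1) (1-t)^(ν-1)` plus `1/(2ν)` times the derivative of `t^ν (1-t)^ν`.
The first part is evaluated by the reflection `t ↦ 1 - t`, under which `Q(1-t) = Q(1) - Q(t)`;
a third integration by parts turns the second part into `-B(μ+ν+1, μ+ν+1) / (2ν)`. The
recurrences of `B` then give the closed form.
-/

open MeasureTheory

open Set intervalIntegral

noncomputable def betaWeight (a b t : ℝ) : ℝ := t ^ (a - 1) * (1 - t) ^ (b - 1)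

noncomputable def incBeta (a b t : ℝ) : ℝ := ∫ s in (0:ℝ)..t, betaWeight a b s

section

variable {a b c d t : ℝ}

theorem betaFn_eq_integral_betaWeight (a b : ℝ) :
    betaFn a b = ∫ t in (0:ℝ)..1, betaWeight a b t := rfl

theorem incBeta_one (a b : ℝ) : incBeta a b 1 = betaFn a b := rfl

theorem regIncBeta_eq (a b t : ℝ) : regIncBeta a b t = (betaFn a b)⁻¹ * incBeta a b t := rfl

theorem ofReal_betaWeight (ht : t ∈ Icc (0:ℝ) 1) :
    (betaWeight a b t : ℂ) = (t : ℂ) ^ ((a : ℂ) - 1) * (1 - (t : ℂ)) ^ ((b : ℂ) - 1) := by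
  rw [betaWeight, Complex.ofReal_mul, Complex.ofReal_cpow ht.1,
    Complex.ofReal_cpow (sub_nonneg.2 ht.2)]
  push_cast
  rfl

theorem intervalIntegrable_betaWeight (ha : 0 < a) (hb : 0 < b) :
    IntervalIntegrable (betaWeight a b) volume 0 1 := by
  have h := Complex.betaIntegral_convergent (u := a) (v := b) (by simpa) (by simpa)
  rw [intervalIntegrable_iff, uIoc_of_le zero_le_one] at h ⊢
  refine IntegrableOn.congr_fun h.re (fun t ht => ?_) measurableSet_Ioc
  rw [← ofReal_betaWeight (Ioc_subset_Icc_self ht), RCLike.re_to_complex, Complex.ofReal_re]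

theorem ofReal_betaFn (a b : ℝ) : (betaFn a b : ℂ) = Complex.betaIntegral a b := by
  rw [betaFn_eq_integral_betaWeight, Complex.betaIntegral, ← intervalIntegral.integral_ofReal]
  refine integral_congr fun t ht => ?_
  rw [uIcc_of_le zero_le_one] at ht
  exact ofReal_betaWeight ht

theorem betaFn_eq_Gamma (ha : 0 < a) (hb : 0 < b) :
    betaFn a b = Real.Gamma a * Real.Gamma b / Real.Gamma (a + b) := by
  apply Complex.ofReal_injective
  rw [ofReal_betaFn, Complex.betaIntegral_eq_Gamma_mul_div _ _ (by simpa) (by simpa)]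
  push_cast
  simp only [← Complex.ofReal_add, Complex.Gamma_ofReal]

theorem betaFn_pos (ha : 0 < a) (hb : 0 < b) : 0 < betaFn a b := by
  rw [betaFn_eq_Gamma ha hb]
  exact div_pos (mul_pos (Real.Gamma_pos_of_pos ha) (Real.Gamma_pos_of_pos hb))
    (Real.Gamma_pos_of_pos (add_pos ha hb))

theorem betaFn_comm (a b : ℝ) : betaFn a b = betaFn b a := by
  apply Complex.ofReal_injective
  rw [ofReal_betaFn, ofReal_betaFn, Complex.betaIntegral_symm]

theorem add_mul_betaFn_add_one_left (ha : 0 < a) (hb : 0 < b) :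
    (a + b) * betaFn (a + 1) b = a * betaFn a b := by
  rw [betaFn_eq_Gamma (by linarith) hb, betaFn_eq_Gamma ha hb, add_right_comm,
    Real.Gamma_add_one ha.ne', Real.Gamma_add_one (by positivity)]
  have := (Real.Gamma_pos_of_pos (add_pos ha hb)).ne'
  field_simp

theorem add_mul_betaFn_add_one_right (ha : 0 < a) (hb : 0 < b) :
    (a + b) * betaFn a (b + 1) = b * betaFn a b := by
  rw [betaFn_comm, add_comm a b, add_mul_betaFn_add_one_left hb ha, betaFn_comm]

theorem betaFn_add_one_add_one (ha : 0 < a) :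
    betaFn (a + 1) (a + 1) = a * betaFn a (a + 1) / (2 * a + 1) := by
  rw [eq_div_iff (by positivity), mul_comm, ← add_mul_betaFn_add_one_left ha (by linarith)]
  ring

theorem betaFn_self (ha : 0 < a) : betaFn a a = 2 * betaFn a (a + 1) := by
  have h := add_mul_betaFn_add_one_right ha ha
  field_simp at h ⊢
  linarith

theorem betaWeight_one_sub (a b t : ℝ) : betaWeight a b (1 - t) = betaWeight b a t := by
  rw [betaWeight, betaWeight, sub_sub_cancel, mul_comm]

theorem betaWeight_add_one_add_one (a b : ℝ) :
    betaWeight (a + 1) (b + 1) = fun t => t ^ a * (1 - t) ^ b := by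
  ext t
  simp only [betaWeight, add_sub_cancel_right]

theorem rpow_eq_rpow_sub_one_mul {x : ℝ} (hx : x ≠ 0) (a : ℝ) : x ^ a = x ^ (a - 1) * x := by
  rw [← Real.rpow_add_one hx, sub_add_cancel]

theorem mul_betaWeight (ht : t ∈ Ioo (0:ℝ) 1) :
    t * betaWeight a b t = betaWeight (a + 1) b t := by
  rw [betaWeight, betaWeight, add_sub_cancel_right, rpow_eq_rpow_sub_one_mul ht.1.ne' a]
  ring

theorem betaWeight_mul_betaWeight (ht : t ∈ Ioo (0:ℝ) 1) :
    betaWeight a b t * betaWeight c d t = betaWeight (a + c - 1) (b + d - 1) t := by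
  have h1 : 0 < 1 - t := sub_pos.2 ht.2
  simp only [betaWeight, show a + c - 1 - 1 = (a - 1) + (c - 1) by ring,
    show b + d - 1 - 1 = (b - 1) + (d - 1) by ring, Real.rpow_add ht.1, Real.rpow_add h1]
  ring

theorem betaWeight_add_one_right_add_betaWeight_add_one_left (ht : t ∈ Ioo (0:ℝ) 1) :
    betaWeight a (b + 1) t + betaWeight (a + 1) b t = betaWeight a b t := by
  simp only [betaWeight, add_sub_cancel_right, rpow_eq_rpow_sub_one_mul ht.1.ne' a,
    rpow_eq_rpow_sub_one_mul (sub_pos.2 ht.2).ne' b]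
  ring

theorem continuousAt_betaWeight (ht : t ∈ Ioo (0:ℝ) 1) : ContinuousAt (betaWeight a b) t :=
  (Real.continuousAt_rpow_const t _ (Or.inl ht.1.ne')).mul
    ((continuous_const.sub continuous_id).continuousAt.rpow_const (Or.inl (sub_pos.2 ht.2).ne'))

theorem continuous_betaWeight_add_one (ha : 0 ≤ a) (hb : 0 ≤ b) :
    Continuous (betaWeight (a + 1) (b + 1)) := by
  rw [betaWeight_add_one_add_one]
  exact (Real.continuous_rpow_const ha).mul
    ((continuous_const.sub continuous_id).rpow_const (fun _ => Or.inr hb))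

theorem hasDerivAt_betaWeight_add_one (ht : t ∈ Ioo (0:ℝ) 1) :
    HasDerivAt (betaWeight (a + 1) (b + 1))
      (a * betaWeight a (b + 1) t - b * betaWeight (a + 1) b t) t := by
  have hl := Real.hasDerivAt_rpow_const (p := a) (Or.inl ht.1.ne')
  have hr := ((hasDerivAt_id t).const_sub 1).rpow_const (p := b) (Or.inl (sub_pos.2 ht.2).ne')
  rw [betaWeight_add_one_add_one]
  refine (hl.fun_mul hr).congr_deriv ?_
  simp only [betaWeight, add_sub_cancel_right, id]
  ring

theorem betaWeight_add_one_one (a : ℝ) (hb : 0 < b) : betaWeight a (b + 1) 1 = 0 := by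
  simp [betaWeight, Real.zero_rpow hb.ne']

theorem incBeta_zero (a b : ℝ) : incBeta a b 0 = 0 := integral_same

theorem intervalIntegrable_betaWeight_of_mem {x y : ℝ} (ha : 0 < a) (hb : 0 < b)
    (hx : x ∈ Icc (0:ℝ) 1) (hy : y ∈ Icc (0:ℝ) 1) :
    IntervalIntegrable (betaWeight a b) volume x y :=
  (intervalIntegrable_betaWeight ha hb).mono_set <| by
    rw [uIcc_of_le zero_le_one]; exact uIcc_subset_Icc hx hy

theorem continuousOn_incBeta (ha : 0 < a) (hb : 0 < b) :
    ContinuousOn (incBeta a b) (uIcc 0 1) :=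
  continuousOn_primitive_interval' (intervalIntegrable_betaWeight ha hb) left_mem_uIcc

theorem hasDerivAt_incBeta (ha : 0 < a) (hb : 0 < b) (ht : t ∈ Ioo (0:ℝ) 1) :
    HasDerivAt (incBeta a b) (betaWeight a b t) t :=
  integral_hasDerivAt_right
    (intervalIntegrable_betaWeight_of_mem ha hb (left_mem_Icc.2 zero_le_one)
      (Ioo_subset_Icc_self ht))
    (ContinuousAt.stronglyMeasurableAtFilter isOpen_Ioo
      (fun _ hs => continuousAt_betaWeight hs) t ht)
    (continuousAt_betaWeight ht)

theorem incBeta_one_sub (ha : 0 < a) (hb : 0 < b) (ht : t ∈ Icc (0:ℝ) 1) :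
    incBeta a b (1 - t) = betaFn a b - incBeta b a t := by
  have ht' : 1 - t ∈ Icc (0:ℝ) 1 := ⟨sub_nonneg.2 ht.2, sub_le_self _ ht.1⟩
  have hsplit := integral_add_adjacent_intervals
    (intervalIntegrable_betaWeight_of_mem ha hb (left_mem_Icc.2 zero_le_one) ht')
    (intervalIntegrable_betaWeight_of_mem ha hb ht' (right_mem_Icc.2 zero_le_one))
  have hreflect : ∫ s in (1 - t)..1, betaWeight a b s = incBeta b a t := by
    simpa [incBeta, betaWeight_one_sub] using
      (integral_comp_sub_left (betaWeight a b) 1 (a := 0) (b := t)).symm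
  rw [incBeta, ← hreflect, betaFn_eq_integral_betaWeight, ← hsplit, add_sub_cancel_right]

theorem integral_incBeta_mul_of_symm {g : ℝ → ℝ} (ha : 0 < a) (hg : ∀ t, g (1 - t) = g t)
    (hg_int : IntervalIntegrable g volume 0 1) :
    ∫ t in (0:ℝ)..1, incBeta a a t * g t = betaFn a a / 2 * ∫ t in (0:ℝ)..1, g t := by
  have h : ∫ t in (0:ℝ)..1, incBeta a a t * g t
      = betaFn a a * (∫ t in (0:ℝ)..1, g t) - ∫ t in (0:ℝ)..1, incBeta a a t * g t := by
    calc ∫ t in (0:ℝ)..1, incBeta a a t * g t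
        = ∫ t in (0:ℝ)..1, incBeta a a (1 - t) * g (1 - t) := by
          simpa using
            (integral_comp_sub_left (fun t => incBeta a a t * g t) 1 (a := 0) (b := 1)).symm
      _ = ∫ t in (0:ℝ)..1, (betaFn a a * g t - incBeta a a t * g t) := by
          refine integral_congr fun t ht => ?_
          rw [uIcc_of_le zero_le_one] at ht
          simp only [incBeta_one_sub ha ha ht, hg]
          ring
      _ = _ := by
          rw [integral_sub (hg_int.const_mul _)
            (hg_int.continuousOn_mul (continuousOn_incBeta ha ha)),
            intervalIntegral.integral_const_mul]
  linarith

theorem intervalIntegrable_deriv_betaWeight (hb : 0 < b) (hd : 0 < d) :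
    IntervalIntegrable (fun t => b * betaWeight b (d + 1) t - d * betaWeight (b + 1) d t)
      volume 0 1 :=
  ((intervalIntegrable_betaWeight hb (by linarith)).const_mul b).sub
    ((intervalIntegrable_betaWeight (by linarith) hd).const_mul d)

theorem integral_incBeta_mul_deriv_betaWeight (ha : 0 < a) (hb : 0 < b) (hc : 0 < c)
    (hd : 0 < d) :
    ∫ t in (0:ℝ)..1, incBeta a c t * (b * betaWeight b (d + 1) t - d * betaWeight (b + 1) d t)
      = -betaFn (a + b) (c + d) := by
  have hibp := integral_mul_deriv_eq_deriv_mul_of_hasDerivAt (continuousOn_incBeta ha hc)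
    (continuous_betaWeight_add_one hb.le hd.le).continuousOn
    (fun t ht => hasDerivAt_incBeta ha hc (by simpa using ht))
    (fun t ht => hasDerivAt_betaWeight_add_one (by simpa using ht))
    (intervalIntegrable_betaWeight ha hc)
    (intervalIntegrable_deriv_betaWeight hb hd)
  rw [hibp, betaWeight_add_one_one _ hd, incBeta_zero, betaFn_eq_integral_betaWeight,
    integral_congr_Ioo_of_le zero_le_one fun t ht => betaWeight_mul_betaWeight ht,
    show a + (b + 1) - 1 = a + b by ring, show c + (d + 1) - 1 = c + d by ring]
  ring

theorem integral_incBeta_mul_betaWeight (ha : 0 < a) (hb : 0 < b) :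
    ∫ t in (0:ℝ)..1, incBeta a a t * betaWeight b (b + 1) t
      = betaFn a a * betaFn b b / 4 - betaFn (a + b) (a + b) / (2 * b) := by
  have hF := continuousOn_incBeta ha ha
  have hsymm :
      ∫ t in (0:ℝ)..1, incBeta a a t * betaWeight b b t = betaFn a a / 2 * betaFn b b :=
    integral_incBeta_mul_of_symm ha (betaWeight_one_sub b b) (intervalIntegrable_betaWeight hb hb)
  have hderiv := integral_incBeta_mul_deriv_betaWeight ha hb ha hb
  have hsplit : ∀ t ∈ Ioo (0:ℝ) 1, incBeta a a t * betaWeight b (b + 1) t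
      = 1 / 2 * (incBeta a a t * betaWeight b b t) + 1 / (2 * b) *
        (incBeta a a t * (b * betaWeight b (b + 1) t - b * betaWeight (b + 1) b t)) := by
    intro t ht
    rw [← betaWeight_add_one_right_add_betaWeight_add_one_left (a := b) (b := b) ht]
    field_simp
    ring
  rw [integral_congr_Ioo_of_le zero_le_one hsplit, intervalIntegral.integral_add,
    intervalIntegral.integral_const_mul, intervalIntegral.integral_const_mul, hsymm, hderiv]
  · ring
  · exact ((intervalIntegrable_betaWeight hb hb).continuousOn_mul hF).const_mul _
  · exact ((intervalIntegrable_deriv_betaWeight hb hb).continuousOn_mul hF).const_mul _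

theorem integral_betaWeight_mul_incBeta (ha : 0 < a) (hb : 0 < b) :
    ∫ t in (0:ℝ)..1, betaWeight a a t * incBeta b (b + 1) t
      = betaFn a a * betaFn b (b + 1) - betaFn a a * betaFn b b / 4
        + betaFn (a + b) (a + b) / (2 * b) := by
  have hb' : 0 < b + 1 := by linarith
  have hibp := integral_mul_deriv_eq_deriv_mul_of_hasDerivAt (continuousOn_incBeta ha ha)
    (continuousOn_incBeta hb hb')
    (fun t ht => hasDerivAt_incBeta ha ha (by simpa using ht))
    (fun t ht => hasDerivAt_incBeta hb hb' (by simpa using ht))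
    (intervalIntegrable_betaWeight ha ha) (intervalIntegrable_betaWeight hb hb')
  rw [integral_incBeta_mul_betaWeight ha hb, incBeta_one, incBeta_one, incBeta_zero] at hibp
  linarith

theorem integral_incBeta_mul_incBeta (ha : 0 < a) (hb : 0 < b) (hc : 0 < c) (hd : 0 < d) :
    ∫ t in (0:ℝ)..1, incBeta a c t * incBeta b d t
      = betaFn a c * betaFn b d - (∫ t in (0:ℝ)..1, betaWeight (a + 1) c t * incBeta b d t)
        - ∫ t in (0:ℝ)..1, betaWeight (b + 1) d t * incBeta a c t := by
  have hF := continuousOn_incBeta ha hc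
  have hG := continuousOn_incBeta hb hd
  have hFG' : IntervalIntegrable
      (fun t => betaWeight a c t * incBeta b d t + incBeta a c t * betaWeight b d t) volume 0 1 :=
    ((intervalIntegrable_betaWeight ha hc).mul_continuousOn hG).add
      ((intervalIntegrable_betaWeight hb hd).continuousOn_mul hF)
  have hibp := integral_mul_deriv_eq_deriv_mul_of_hasDerivAt (hF.mul hG) continuousOn_id
    (fun t ht => (hasDerivAt_incBeta ha hc (by simpa using ht)).mul
      (hasDerivAt_incBeta hb hd (by simpa using ht)))
    (fun t _ => hasDerivAt_id t) hFG' intervalIntegrable_const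
  have hweight : ∀ t ∈ Ioo (0:ℝ) 1,
      (betaWeight a c t * incBeta b d t + incBeta a c t * betaWeight b d t) * id t
        = betaWeight (a + 1) c t * incBeta b d t + betaWeight (b + 1) d t * incBeta a c t := by
    intro t ht
    rw [← mul_betaWeight ht, ← mul_betaWeight ht, id]
    ring
  rw [integral_congr_Ioo_of_le zero_le_one hweight, intervalIntegral.integral_add] at hibp
  · simpa [incBeta_one, incBeta_zero, sub_sub] using hibp
  · exact (intervalIntegrable_betaWeight (by linarith) hc).mul_continuousOn hG
  · exact (intervalIntegrable_betaWeight (by linarith) hd).mul_continuousOn hF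

end

/-- `∫₀¹ I(μ,μ+1;t) I(ν,ν+1;t) dt` in closed form. -/
theorem stmt10 (m n : ℝ) (hm : 0 < m) (hn : 0 < n) :
    ∫ t in (0:ℝ)..1, regIncBeta m (m + 1) t * regIncBeta n (n + 1) t =
      (4 * m * n + 3 * (m + n) + 2) / (2 * (2 * m + 1) * (2 * n + 1)) -
        (m + n) * betaFn (m + n + 1) (m + n + 2) /
          (m * n * betaFn m (m + 1) * betaFn n (n + 1)) := by
  have hm' : 0 < m + 1 := by linarith
  have hn' : 0 < n + 1 := by linarith
  have hreg (t : ℝ) : regIncBeta m (m + 1) t * regIncBeta n (n + 1) t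
      = (betaFn m (m + 1))⁻¹ * (betaFn n (n + 1))⁻¹ *
        (incBeta m (m + 1) t * incBeta n (n + 1) t) := by
    rw [regIncBeta_eq, regIncBeta_eq]
    ring
  simp only [hreg, intervalIntegral.integral_const_mul]
  rw [integral_incBeta_mul_incBeta hm hn hm' hn', integral_betaWeight_mul_incBeta hm' hn,
    integral_betaWeight_mul_incBeta hn' hm, show n + 1 + m = m + n + 1 by ring,
    show m + 1 + n = m + n + 1 by ring, betaFn_self (by linarith : 0 < m + n + 1),
    betaFn_self hm, betaFn_self hn, betaFn_add_one_add_one hm, betaFn_add_one_add_one hn,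
    show m + n + 1 + 1 = m + n + 2 by ring]
  have := (betaFn_pos hm hm').ne'
  have := (betaFn_pos hn hn').ne'
  field_simp
  ring
end
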